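/- Let G be a finite group. Let S_G be the set of nontrivial conjugacy classes ĉ of G with ĉ = ĉ⁻¹, and let T_G be the set of conjugacy classes ĉ with ĉ ≠ ĉ⁻¹, so that |T_G| is even. Let G' = G/[G,G], let M ⊆ G' be the set of cosets x[G,G] that contain an element y whose conjugacy class satisfies ŷ = ŷ⁻¹, let K' be the subgroup of G' generated by M (an elementary abelian 2-group), and let n_{K'} be its rank. Then the group of singular orbit data satisfies 𝔹_G ≅ ℤ^{|T_G|/2} ⊕ (ℤ/2ℤ)^{|S_G| − n_{K'}}. -/

import Mathlib

/-!
The involution `ĉ ↦ ĉ⁻¹` of the nontrivial classes gives coordinates on `F / N`: a pair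
`ĉ ≠ ĉ⁻¹` contributes a copy of `ℤ` (the coefficient of `ĉ` minus that of `ĉ⁻¹`) and a class
`ĉ = ĉ⁻¹` a copy of `ℤ/2` (its coefficient mod 2), so `F / N ≅ ℤ^(|T_G|/2) × (ℤ/2)^|S_G|`.
Since `N ≤ ker φ`, the map `φ` descends to `Φ(v, u) = χ v + ψ u` on these coordinates and
`𝔹_G = ker φ / N ≅ ker Φ`. The image of `ψ` is `K'`, so `ker ψ ≅ (ℤ/2)^(|S_G| - n_{K'})`.
Projecting `ker Φ` to the first coordinate gives an extension of `χ⁻¹(im ψ)` by `ker ψ`; as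
`G/[G,G]` is finite, `χ⁻¹(im ψ)` has finite index in `ℤ^(|T_G|/2)`, hence is free of the same
rank, and the extension splits.
-/

namespace SingOrbit

variable (G : Type*) [Group G]

/-- The map from conjugacy classes to the abelianization. -/
def classAb : ConjClasses G → Additive (Abelianization G) :=
  Quotient.lift (fun g : G => Additive.ofMul (Abelianization.of g)) <| by
    intro a b hab
    obtain ⟨c, hc⟩ := isConj_iff.mp (hab : IsConj a b)
    subst hc
    show Additive.ofMul (Abelianization.of a) = Additive.ofMul (Abelianization.of (c * a * c⁻¹))
    congr 1
    rw [map_mul, map_mul, map_inv, mul_comm (Abelianization.of c) (Abelianization.of a),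
      mul_inv_cancel_right]

/-- Nontrivial conjugacy classes. -/
def NCC := {c : ConjClasses G // c ≠ 1}

/-- The homomorphism `φ` from the free abelian group on the nontrivial conjugacy classes
to the abelianization, sending a conjugacy class to the image of any representative. -/
noncomputable def phi : FreeAbelianGroup (NCC G) →+ Additive (Abelianization G) :=
  FreeAbelianGroup.lift fun c => classAb G c.1

/-- The basis element of the free abelian group corresponding to a conjugacy class
(`0` for the trivial class). -/
noncomputable def clsC (c : ConjClasses G) : FreeAbelianGroup (NCC G) :=
  letI := Classical.dec (c = 1)
  if h : c = 1 then 0 else FreeAbelianGroup.of ⟨c, h⟩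

/-- The basis element corresponding to the conjugacy class of a group element. -/
noncomputable def clsF (x : G) : FreeAbelianGroup (NCC G) := clsC G (ConjClasses.mk x)

/-- The subgroup generated by the elements `x̂ + x̂⁻¹`. -/
noncomputable def NSub : AddSubgroup (FreeAbelianGroup (NCC G)) :=
  AddSubgroup.closure {a | ∃ x : G, a = clsF G x + clsF G x⁻¹}

/-- The group `𝔹_G` of singular orbit data: `(ker φ) / N`. -/
noncomputable def SOD := (phi G).ker ⧸ ((NSub G).addSubgroupOf (phi G).ker)

noncomputable instance : AddCommGroup (SOD G) :=
  inferInstanceAs (AddCommGroup ((phi G).ker ⧸ ((NSub G).addSubgroupOf (phi G).ker)))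

variable {G}

lemma classAb_mk (x : G) :
    classAb G (ConjClasses.mk x) = Additive.ofMul (Abelianization.of x) := rfl

lemma mk_eq_one_iff {x : G} : ConjClasses.mk x = 1 ↔ x = 1 := by
  rw [ConjClasses.one_eq_mk_one, ConjClasses.mk_eq_mk_iff_isConj, isConj_one_left]

lemma phi_of (c : NCC G) : phi G (FreeAbelianGroup.of c) = classAb G c.1 :=
  FreeAbelianGroup.lift_apply_of _ _

lemma phi_clsF (x : G) : phi G (clsF G x) = Additive.ofMul (Abelianization.of x) := by
  rw [clsF, clsC]
  split_ifs with h
  · have hx : x = 1 := mk_eq_one_iff.mp h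
    subst hx
    simp
  · exact (phi_of (G := G) ⟨ConjClasses.mk x, h⟩).trans (classAb_mk x)

/-- The element of the free abelian group associated to a list of group elements. -/
noncomputable def sumF (l : List G) : FreeAbelianGroup (NCC G) := (l.map (clsF G)).sum

lemma sumF_nil : sumF ([] : List G) = 0 := rfl

lemma sumF_cons (a : G) (t : List G) : sumF (a :: t) = clsF G a + sumF t := by
  simp [sumF]

lemma phi_sumF (l : List G) :
    phi G (sumF l) = Additive.ofMul (Abelianization.of l.prod) := by
  induction l with
  | nil => simp [sumF_nil]
  | cons a t ih =>
    rw [sumF_cons, map_add, phi_clsF, ih, List.prod_cons, map_mul, ofMul_mul]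

lemma abOf_eq_one_iff {x : G} : Abelianization.of x = 1 ↔ x ∈ commutator G :=
  QuotientGroup.eq_one_iff x

lemma sumF_mem_ker {l : List G} (h : l.prod ∈ commutator G) : sumF l ∈ (phi G).ker := by
  rw [AddMonoidHom.mem_ker, phi_sumF, abOf_eq_one_iff.mpr h]
  rfl

/-- The singular orbit datum `[x̂₁, …, x̂_q]` associated to a list of group elements whose
product lies in the commutator subgroup. -/
noncomputable def data (l : List G) (h : l.prod ∈ commutator G) : SOD G :=
  (QuotientAddGroup.mk ⟨sumF l, sumF_mem_ker h⟩ : SOD G)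

/-- The inverse of a conjugacy class. -/
def invC {G : Type*} [Group G] : ConjClasses G → ConjClasses G :=
  Quotient.lift (fun g : G => ConjClasses.mk g⁻¹) <| by
    intro a b hab
    rw [ConjClasses.mk_eq_mk_iff_isConj]
    obtain ⟨c, rfl⟩ := isConj_iff.mp (hab : IsConj a b)
    exact isConj_iff.mpr ⟨c, by group⟩

end SingOrbit

open Function

section Involution

open Finsupp

variable {ι : Type*} [LinearOrder ι] (σ : ι → ι)

noncomputable def pairCoords : (ι →₀ ℤ) →+ ({i // i < σ i} → ℤ) × ({i // σ i = i} → ZMod 2) :=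
  (AddMonoidHom.pi fun r => applyAddHom r.1 - applyAddHom (σ r.1)).prod
    (AddMonoidHom.pi fun s => (Int.castAddHom (ZMod 2)).comp (applyAddHom s.1))

@[simp]
lemma pairCoords_apply (f : ι →₀ ℤ) :
    pairCoords σ f =
      (fun r : {i // i < σ i} => f r - f (σ r), fun s : {i // σ i = i} => (f s : ZMod 2)) := rfl

noncomputable def pairSum (i : ι) : ι →₀ ℤ := single i 1 + single (σ i) 1

noncomputable def pairSpan : AddSubgroup (ι →₀ ℤ) := AddSubgroup.closure (Set.range (pairSum σ))

variable {σ}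

lemma pairSum_apply_apply (hσ : Involutive σ) (i j : ι) : pairSum σ i (σ j) = pairSum σ i j := by
  simp only [pairSum, Finsupp.add_apply, single_apply, hσ.injective.eq_iff, hσ.eq_iff]
  rw [add_comm]

lemma sum_smul_pairSum_apply [Fintype ι] (hσ : Involutive σ) (c : ι → ℤ) (j : ι) :
    (∑ i, c i • pairSum σ i) j = c j + c (σ j) := by
  simp [pairSum, single_apply, hσ.eq_iff, smul_add, Finset.sum_add_distrib]

lemma pairSpan_le_ker (hσ : Involutive σ) : pairSpan σ ≤ (pairCoords σ).ker := by
  refine (AddSubgroup.closure_le _).mpr ?_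
  rintro _ ⟨i, rfl⟩
  refine Prod.ext (funext fun r => ?_) (funext fun s => ?_)
  · simp [pairSum_apply_apply hσ]
  · have hs : σ i = s ↔ i = s := by rw [hσ.eq_iff, s.2]
    simp only [pairCoords_apply, pairSum, Finsupp.add_apply, single_apply, hs]
    split_ifs <;> rfl

lemma ker_pairCoords_le [Fintype ι] (hσ : Involutive σ) : (pairCoords σ).ker ≤ pairSpan σ := by
  intro f hf
  have hpair (r : {i // i < σ i}) : f r = f (σ r) :=
    sub_eq_zero.mp (congrFun (congrArg Prod.fst hf) r)
  have heven (s : {i // σ i = i}) : (2 : ℤ) ∣ f s :=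
    (ZMod.intCast_zmod_eq_zero_iff_dvd _ 2).mp (congrFun (congrArg Prod.snd hf) s)
  -- `f i` for `σ i < i` is carried by the generator of the pair `{i, σ i}`; at a fixed point `s`
  -- the generator is `2 • single s 1`, and `f s` is even
  let c : ι → ℤ := fun i => if σ i < i then f i else if σ i = i then f i / 2 else 0
  have hfc : f = ∑ i, c i • pairSum σ i := by
    ext j
    rw [sum_smul_pairSum_apply hσ]
    rcases lt_trichotomy j (σ j) with h | h | h
    · simp [c, hσ j, h, h.not_gt, h.ne', hpair ⟨j, h⟩]
    · have : (2 : ℤ) ∣ f j := heven ⟨j, h.symm⟩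
      simp [c, ← h]
      omega
    · simp [c, hσ j, h, h.not_gt, h.ne']
  rw [hfc]
  exact AddSubgroup.sum_mem (pairSpan σ) fun i _ =>
    AddSubgroup.zsmul_mem _ (AddSubgroup.subset_closure (Set.mem_range_self i)) _

lemma ker_pairCoords [Finite ι] (hσ : Involutive σ) : (pairCoords σ).ker = pairSpan σ :=
  have := Fintype.ofFinite ι
  le_antisymm (ker_pairCoords_le hσ) (pairSpan_le_ker hσ)

lemma pairCoords_surjective [Finite ι] (hσ : Involutive σ) : Surjective (pairCoords σ) := by
  rintro ⟨v, u⟩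
  let g : ι → ℤ := fun j =>
    if h : j < σ j then v ⟨j, h⟩ else if h' : σ j = j then (u ⟨j, h'⟩).val else 0
  refine ⟨equivFunOnFinite.symm g, Prod.ext (funext fun r => ?_) (funext fun s => ?_)⟩
  · have h₁ : ¬ σ r < σ (σ r) := by rw [hσ]; exact r.2.not_gt
    have h₂ : ¬ σ (σ r) = σ r := by rw [hσ]; exact r.2.ne
    simp [g, r.2, h₁, h₂]
  · simp [g, s.2]

lemma pairCoords_single_of_fixed (hσ : Involutive σ) (s : {i // σ i = i}) :
    pairCoords σ (single s 1) = (0, Pi.single s 1) := by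
  refine Prod.ext (funext fun r => ?_) (funext fun s' => ?_)
  · have h₁ : (s : ι) ≠ r := fun h => r.2.ne (by rw [← h, s.2])
    have h₂ : (s : ι) ≠ σ r := fun h => r.2.ne (by have := s.2; rwa [h, hσ] at this)
    simp [single_apply, h₁, h₂]
  · by_cases h : s' = s
    · subst h; simp [pairCoords_apply]
    · simp [pairCoords_apply, single_apply, Ne.symm (Subtype.coe_ne_coe.mpr h), h]

lemma card_ne_eq_two_mul_card_lt [Finite ι] (hσ : Involutive σ) :
    Nat.card {i // σ i ≠ i} = 2 * Nat.card {i // i < σ i} := by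
  have swap : {i // σ i < i} ≃ {i // i < σ i} :=
    (hσ.toPerm σ).subtypeEquiv fun i => by simp [hσ i]
  rw [two_mul, ← Nat.card_sum]
  refine Nat.card_congr ((Equiv.subtypeEquivRight fun i => ?_).trans
    ((subtypeOrEquiv _ _ ?_).trans ((Equiv.refl _).sumCongr swap)))
  · rw [ne_comm]; exact ne_iff_lt_or_gt
  · exact fun p hp hq i hi => (lt_asymm (hp i hi) (hq i hi)).elim

end Involution

section Kernels

variable {F W A : Type*} [AddCommGroup F] [AddCommGroup W] [AddCommGroup A]

noncomputable def AddMonoidHom.quotientEquivKerOfComp (π : F →+ W) (hπ : Surjective π)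
    (Φ : W →+ A) {φ : F →+ A} (hφ : Φ.comp π = φ) {N : AddSubgroup F} (hN : π.ker = N) :
    φ.ker ⧸ N.addSubgroupOf φ.ker ≃+ Φ.ker := by
  subst hφ hN
  let ρ : (Φ.comp π).ker →+ W := π.comp (Φ.comp π).ker.subtype
  have hker : ρ.ker = π.ker.addSubgroupOf (Φ.comp π).ker := by
    ext x
    simp [ρ, AddSubgroup.mem_addSubgroupOf]
  have hrange : ρ.range = Φ.ker := by
    ext w
    constructor
    · rintro ⟨x, rfl⟩
      exact x.2
    · intro hw
      obtain ⟨x, rfl⟩ := hπ w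
      exact ⟨⟨x, hw⟩, rfl⟩
  exact (QuotientAddGroup.quotientAddEquivOfEq hker.symm).trans
    ((QuotientAddGroup.quotientKerEquivRange ρ).trans (AddEquiv.addSubgroupCongr hrange))

end Kernels

section Coprod

variable {V U A : Type*} [AddCommGroup V] [AddCommGroup U] [AddCommGroup A]

theorem AddMonoidHom.nonempty_ker_coprod_addEquiv (χ : V →+ A) (ψ : U →+ A)
    [Module.Projective ℤ (ψ.range.comap χ)] :
    Nonempty ((χ.coprod ψ).ker ≃+ ψ.ker × ψ.range.comap χ) := by
  let K := (χ.coprod ψ).ker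
  let g : K →+ ψ.range.comap χ :=
    ((AddMonoidHom.fst V U).comp K.subtype).codRestrict _ fun w =>
      ⟨-w.1.2, by rw [map_neg, neg_eq_iff_add_eq_zero, add_comm]; exact w.2⟩
  let f : ψ.ker →+ K :=
    ((AddMonoidHom.inr V U).comp ψ.ker.subtype).codRestrict _ fun u => by
      simpa [K] using AddMonoidHom.mem_ker.mp u.2
  have hf : Injective f := fun u u' h => Subtype.ext (congrArg (fun w : K => w.1.2) h)
  have hexact : Exact f.toIntLinearMap g.toIntLinearMap := by
    rintro ⟨⟨v, u⟩, hw⟩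
    constructor
    · intro h
      have hv : v = 0 := congrArg Subtype.val h
      subst hv
      exact ⟨⟨u, by simpa [K] using hw⟩, rfl⟩
    · rintro ⟨u, hu⟩
      rw [← hu]
      rfl
  have hg : Surjective g := by
    rintro ⟨v, u, hu⟩
    exact ⟨⟨(v, -u), by simp [K, hu]⟩, rfl⟩
  obtain ⟨l, hl⟩ := Module.projective_lifting_property g.toIntLinearMap LinearMap.id hg
  exact ⟨(hexact.splitSurjectiveEquiv hf ⟨l, hl⟩).1.toAddEquiv⟩

end Coprod

section Lattices

variable {ι : Type*} [Finite ι]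

instance AddSubgroup.free_int_pi (Q : AddSubgroup (ι → ℤ)) : Module.Free ℤ Q :=
  Module.Free.of_equiv (AddEquiv.refl _ : Q.toIntSubmodule ≃+ Q).toIntLinearEquiv

instance AddSubgroup.finite_int_pi (Q : AddSubgroup (ι → ℤ)) : Module.Finite ℤ Q :=
  Module.Finite.equiv (AddEquiv.refl _ : Q.toIntSubmodule ≃+ Q).toIntLinearEquiv

theorem AddSubgroup.nonempty_addEquiv_of_finiteIndex (Q : AddSubgroup (ι → ℤ)) [Q.FiniteIndex] :
    Nonempty (Q ≃+ (Fin (Nat.card ι) → ℤ)) := by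
  have := Fintype.ofFinite ι
  refine ⟨(LinearEquiv.ofFinrankEq (R := ℤ) _ _ ?_).toAddEquiv⟩
  rw [AddSubgroup.finrank_eq_of_finiteIndex, Module.finrank_fin_fun, Module.finrank_pi,
    Nat.card_eq_fintype_card]

end Lattices

section ElementaryAbelian

theorem nonempty_addEquiv_fin_of_card {p k : ℕ} [Fact p.Prime] {M : Type*} [AddCommGroup M]
    [Module (ZMod p) M] [Finite M] (h : Nat.card M = p ^ k) : Nonempty (M ≃+ (Fin k → ZMod p)) := by
  have := Fintype.ofFinite M
  have hk : Module.finrank (ZMod p) M = k := by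
    rw [Nat.card_eq_fintype_card, Module.card_eq_pow_finrank (K := ZMod p), ZMod.card] at h
    exact Nat.pow_right_injective (Fact.out : p.Prime).two_le h
  exact ⟨(LinearEquiv.ofFinrankEq _ _ (by rw [hk, Module.finrank_fin_fun])).toAddEquiv⟩

theorem AddMonoidHom.nonempty_ker_addEquiv_fin {ι A : Type*} [Finite ι] [AddCommGroup A]
    {p n : ℕ} [Fact p.Prime] (ψ : (ι → ZMod p) →+ A) (h : Nat.card ψ.range = p ^ n) :
    Nonempty (ψ.ker ≃+ (Fin (Nat.card ι - n) → ZMod p)) := by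
  have hp := (Fact.out : p.Prime).one_lt
  have hcard : Nat.card ψ.ker * p ^ n = p ^ Nat.card ι := by
    rw [← h, ← AddSubgroup.index_ker, AddSubgroup.card_mul_index, Nat.card_fun, Nat.card_zmod]
  have hn : n ≤ Nat.card ι := (Nat.pow_dvd_pow_iff_le_right hp).mp (Dvd.intro_left _ hcard)
  have hker : Nat.card (AddSubgroup.toZModSubmodule p ψ.ker) = p ^ (Nat.card ι - n) := by
    rw [← Nat.pow_div hn (by omega), ← hcard, Nat.mul_div_cancel _ (by positivity)]
    rfl
  exact nonempty_addEquiv_fin_of_card hker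

end ElementaryAbelian

namespace SingOrbit

variable {G : Type*} [Group G]

lemma invC_mk (x : G) : invC (ConjClasses.mk x) = ConjClasses.mk x⁻¹ := rfl

lemma invC_involutive : Involutive (invC : ConjClasses G → ConjClasses G) := fun c => by
  obtain ⟨x, rfl⟩ := ConjClasses.mk_surjective c
  rw [invC_mk, invC_mk, inv_inv]

lemma invC_eq_one_iff {c : ConjClasses G} : invC c = 1 ↔ c = 1 := by
  obtain ⟨x, rfl⟩ := ConjClasses.mk_surjective c
  rw [invC_mk, mk_eq_one_iff, mk_eq_one_iff, inv_eq_one]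

def NCC.inv (c : NCC G) : NCC G := ⟨invC c.1, fun h => c.2 (invC_eq_one_iff.mp h)⟩

lemma NCC.inv_eq_self_iff {c : NCC G} : c.inv = c ↔ invC c.1 = c.1 := Subtype.ext_iff

lemma NCC.inv_involutive : Involutive (NCC.inv (G := G)) :=
  fun c => Subtype.ext (invC_involutive c.1)

open Classical in
/-- Any linear order will do: it only selects one class out of each pair `{ĉ, ĉ⁻¹}`. -/
noncomputable instance : LinearOrder (NCC G) := linearOrderOfSTO WellOrderingRel

lemma clsF_one : clsF G 1 = 0 := by
  rw [clsF, ← ConjClasses.one_eq_mk_one, clsC, dif_pos rfl]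

lemma clsF_add_clsF_inv {x : G} {c : NCC G} (hx : ConjClasses.mk x = c.1) :
    clsF G x + clsF G x⁻¹ = FreeAbelianGroup.of c + FreeAbelianGroup.of c.inv := by
  have hinv : ConjClasses.mk x⁻¹ = c.inv.1 := by rw [← invC_mk, hx]; rfl
  rw [clsF, clsF, hx, hinv, clsC, clsC, dif_neg c.2, dif_neg c.inv.2]
  rfl

lemma equivFinsupp_of_add_of_inv (c : NCC G) :
    FreeAbelianGroup.equivFinsupp (NCC G) (FreeAbelianGroup.of c + FreeAbelianGroup.of c.inv) =
      pairSum NCC.inv c := by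
  simp [pairSum, FreeAbelianGroup.equivFinsupp]

lemma map_NSub :
    (NSub G).map (FreeAbelianGroup.equivFinsupp (NCC G)).toAddMonoidHom = pairSpan NCC.inv := by
  rw [NSub, pairSpan, AddMonoidHom.map_closure]
  apply le_antisymm <;> rw [AddSubgroup.closure_le]
  · rintro _ ⟨_, ⟨x, rfl⟩, rfl⟩
    by_cases h : ConjClasses.mk x = 1
    · rw [mk_eq_one_iff.mp h, inv_one, clsF_one, add_zero, map_zero]
      exact zero_mem _
    · let c : NCC G := ⟨_, h⟩
      rw [AddEquiv.coe_toAddMonoidHom, clsF_add_clsF_inv (c := c) rfl,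
        equivFinsupp_of_add_of_inv]
      exact AddSubgroup.subset_closure (Set.mem_range_self c)
  · rintro _ ⟨c, rfl⟩
    obtain ⟨x, hx⟩ := ConjClasses.mk_surjective c.1
    refine AddSubgroup.subset_closure ⟨_, ⟨x, rfl⟩, ?_⟩
    rw [AddEquiv.coe_toAddMonoidHom, clsF_add_clsF_inv hx, equivFinsupp_of_add_of_inv]

lemma NSub_le_ker_phi : NSub G ≤ (phi G).ker := by
  rw [NSub, AddSubgroup.closure_le]
  rintro _ ⟨x, rfl⟩
  rw [SetLike.mem_coe, AddMonoidHom.mem_ker, map_add, phi_clsF, phi_clsF, ← ofMul_mul,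
    ← map_mul, mul_inv_cancel, map_one, ofMul_one]

noncomputable def toCoords : FreeAbelianGroup (NCC G) →+
    ({c : NCC G // c < c.inv} → ℤ) × ({c : NCC G // c.inv = c} → ZMod 2) :=
  (pairCoords NCC.inv).comp (FreeAbelianGroup.equivFinsupp (NCC G)).toAddMonoidHom

lemma toCoords_of_selfInverse (s : {c : NCC G // c.inv = c}) :
    toCoords (FreeAbelianGroup.of s.1) = (0, Pi.single s 1) := by
  simpa [toCoords, FreeAbelianGroup.equivFinsupp] using
    pairCoords_single_of_fixed NCC.inv_involutive s

lemma card_selfInverse :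
    Nat.card {c : ConjClasses G // c ≠ 1 ∧ invC c = c} = Nat.card {c : NCC G // c.inv = c} :=
  Nat.card_congr <|
    (Equiv.subtypeSubtypeEquivSubtypeInter (· ≠ 1) (fun c => invC c = c)).symm.trans
      (Equiv.subtypeEquivRight fun _ => NCC.inv_eq_self_iff.symm)

lemma card_notSelfInverse :
    Nat.card {c : ConjClasses G // invC c ≠ c} = Nat.card {c : NCC G // c.inv ≠ c} := by
  have hne : ∀ c : ConjClasses G, invC c ≠ c → c ≠ 1 := fun c h h1 =>
    h (by rw [h1, invC_eq_one_iff])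
  exact Nat.card_congr <|
    (Equiv.subtypeEquivRight fun c => (and_iff_right_of_imp (hne c)).symm).trans
      ((Equiv.subtypeSubtypeEquivSubtypeInter (· ≠ 1) (fun c => invC c ≠ c)).symm.trans
        (Equiv.subtypeEquivRight fun _ => not_congr NCC.inv_eq_self_iff.symm))

section

variable [Finite G]

instance : Finite (NCC G) := inferInstanceAs (Finite {c : ConjClasses G // c ≠ 1})

lemma ker_toCoords : (toCoords (G := G)).ker = NSub G := by
  rw [toCoords, ← AddMonoidHom.comap_ker, ker_pairCoords NCC.inv_involutive, ← map_NSub,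
    AddSubgroup.comap_map_eq_self_of_injective
      (f := (FreeAbelianGroup.equivFinsupp (NCC G)).toAddMonoidHom)
      (FreeAbelianGroup.equivFinsupp (NCC G)).injective]

lemma toCoords_surjective : Surjective (toCoords (G := G)) :=
  (pairCoords_surjective NCC.inv_involutive).comp (FreeAbelianGroup.equivFinsupp _).surjective

noncomputable def abOfCoords :
    ({c : NCC G // c < c.inv} → ℤ) × ({c : NCC G // c.inv = c} → ZMod 2) →+
      Additive (Abelianization G) :=
  toCoords.liftOfRightInverse _ (rightInverse_surjInv toCoords_surjective)
    ⟨phi G, ker_toCoords (G := G) ▸ NSub_le_ker_phi⟩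

lemma abOfCoords_comp_toCoords : (abOfCoords (G := G)).comp toCoords = phi G :=
  AddMonoidHom.liftOfRightInverse_comp _ _ _ _

lemma abOfCoords_inr_single (s : {c : NCC G // c.inv = c}) :
    abOfCoords.comp (AddMonoidHom.inr _ _) (Pi.single s 1) = classAb G s.1.1 := by
  rw [AddMonoidHom.comp_apply, AddMonoidHom.inr_apply, ← toCoords_of_selfInverse,
    ← AddMonoidHom.comp_apply, abOfCoords_comp_toCoords, phi_of]

lemma range_abOfCoords_comp_inr :
    (abOfCoords.comp (AddMonoidHom.inr _ _)).range = Subgroup.toAddSubgroup (Subgroup.closure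
      {x : Abelianization G | ∃ y : G, Abelianization.of y = x ∧
        invC (ConjClasses.mk y) = ConjClasses.mk y}) := by
  rw [Subgroup.toAddSubgroup_closure]
  apply le_antisymm
  · rintro _ ⟨u, rfl⟩
    have := Fintype.ofFinite {c : NCC G // c.inv = c}
    rw [← Finset.univ_sum_single u, map_sum]
    refine AddSubgroup.sum_mem _ fun s _ => ?_
    have hsingle : Pi.single s (u s) = (u s).val • (Pi.single s 1 : _ → ZMod 2) := by
      rw [← Pi.single_smul' s (u s).val (1 : ZMod 2), nsmul_one, ZMod.natCast_zmod_val]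
    rw [hsingle, map_nsmul]
    refine nsmul_mem ?_ _
    obtain ⟨y, hy⟩ := ConjClasses.mk_surjective s.1.1
    rw [abOfCoords_inr_single, ← hy]
    exact AddSubgroup.subset_closure ⟨y, rfl, hy ▸ NCC.inv_eq_self_iff.mp s.2⟩
  · rw [AddSubgroup.closure_le]
    rintro x ⟨y, hxy, hy⟩
    obtain rfl : x = Additive.ofMul (Abelianization.of y) := hxy.symm
    by_cases h : ConjClasses.mk y = 1
    · rw [mk_eq_one_iff.mp h, map_one, ofMul_one]
      exact zero_mem _
    · exact ⟨Pi.single ⟨⟨_, h⟩, NCC.inv_eq_self_iff.mpr hy⟩ 1, abOfCoords_inr_single _⟩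

end

/-- the main theorem.  For a finite group `G`, with `S_G` the set of
nontrivial self-inversive conjugacy classes, `T_G` the set of conjugacy classes distinct
from their inverses, and `n_{K'}` the rank of the subgroup `K'` of `G/[G,G]` generated by
the cosets containing an element whose class is self-inversive,
`𝔹_G ≅ ℤ^(|T_G|/2) ⊕ (ℤ/2ℤ)^(|S_G| - n_{K'})`. -/
theorem stmt13 (G : Type*) [Group G] [Finite G] (s t nK : ℕ)
    (hs : s = Nat.card {c : ConjClasses G // c ≠ 1 ∧ invC c = c})
    (ht : t = Nat.card {c : ConjClasses G // invC c ≠ c})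
    (K' : Subgroup (Abelianization G))
    (hK' : K' = Subgroup.closure
      {x : Abelianization G | ∃ y : G, Abelianization.of y = x ∧
        invC (ConjClasses.mk y) = ConjClasses.mk y})
    (hnK : Nat.card K' = 2 ^ nK) :
    Nonempty (SOD G ≃+ (Fin (t / 2) → ℤ) × (Fin (s - nK) → ZMod 2)) := by
  subst hs ht hK'
  let χ := (abOfCoords (G := G)).comp (AddMonoidHom.inl _ _)
  let ψ := (abOfCoords (G := G)).comp (AddMonoidHom.inr _ _)
  have hΦ : abOfCoords.ker = (χ.coprod ψ).ker := by
    rw [← AddMonoidHom.comp_coprod, AddMonoidHom.coprod_inl_inr, AddMonoidHom.comp_id]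
  have : (ψ.range.comap χ).FiniteIndex :=
    AddSubgroup.finiteIndex_of_le (AddMonoidHom.ker_le_comap χ _)
  obtain ⟨eTors⟩ := ψ.nonempty_ker_addEquiv_fin (p := 2) (n := nK)
    (by rw [range_abOfCoords_comp_inr]; exact hnK)
  obtain ⟨eFree⟩ := (ψ.range.comap χ).nonempty_addEquiv_of_finiteIndex
  obtain ⟨eSplit⟩ := χ.nonempty_ker_coprod_addEquiv ψ
  rw [card_selfInverse, card_notSelfInverse, card_ne_eq_two_mul_card_lt NCC.inv_involutive,
    Nat.mul_div_cancel_left _ two_pos]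
  exact ⟨(toCoords.quotientEquivKerOfComp toCoords_surjective abOfCoords abOfCoords_comp_toCoords
    ker_toCoords).trans ((AddEquiv.addSubgroupCongr hΦ).trans
      (eSplit.trans ((eTors.prodCongr eFree).trans AddEquiv.prodComm)))⟩

end SingOrbit
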